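/- (Rigidity of repeatable measurements.) Let H_S and H_A be finite-dimensional complex Hilbert spaces, L_S a self-adjoint operator on H_S, L_A a self-adjoint operator on H_A, and let U be a unitary operator on H_S ⊗ H_A commuting with L_S ⊗ 1 + 1 ⊗ L_A. Let ψ0, ψ1 ∈ H_S be orthogonal unit vectors with ⟨ψ0, L_S ψ1⟩ ≠ 0, let Ω ∈ H_A be a unit vector, and suppose the measurement is repeatable in the sense that U(ψ_j ⊗ Ω) = ψ_j ⊗ φ_j for unit vectors φ_0, φ_1 ∈ H_A (j = 0, 1). Then φ_0 = φ_1; in particular the final apparatus states are identical and carry no information distinguishing ψ0 from ψ1. -/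

import Mathlib

open Matrix Kronecker
open scoped ComplexOrder

-- Positive semidefinite square root (zero if not PSD).
open Classical in
noncomputable def psqrt {n : Type*} [Fintype n] [DecidableEq n] (A : Matrix n n ℂ) :
    Matrix n n ℂ :=
  if h : A.PosSemidef then
    h.1.eigenvectorUnitary.1 * diagonal ((↑) ∘ Real.sqrt ∘ h.1.eigenvalues) *
      (star h.1.eigenvectorUnitary : Matrix n n ℂ)
  else 0

/-- Fidelity F(ρ0,ρ1) = tr √(√ρ0 ρ1 √ρ0). -/
noncomputable def fidelity {n : Type*} [Fintype n] [DecidableEq n] (ρ0 ρ1 : Matrix n n ℂ) : ℝ :=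
  (psqrt (psqrt ρ0 * ρ1 * psqrt ρ0)).trace.re

/-- Operator (ℓ²→ℓ²) norm of a matrix. -/
noncomputable def opNorm {n : Type*} [Fintype n] [DecidableEq n] (A : Matrix n n ℂ) : ℝ :=
  ‖LinearMap.toContinuousLinearMap (Matrix.toEuclideanLin A)‖

/-- Partial trace over the right (second) factor. -/
noncomputable def ptraceRight {m n : Type*} [Fintype m] [Fintype n]
    (ρ : Matrix (m × n) (m × n) ℂ) : Matrix m m ℂ :=
  Matrix.of fun i j => ∑ k, ρ (i, k) (j, k)

/-- Partial trace over the left (first) factor. -/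
noncomputable def ptraceLeft {m n : Type*} [Fintype m] [Fintype n]
    (ρ : Matrix (m × n) (m × n) ℂ) : Matrix n n ℂ :=
  Matrix.of fun i j => ∑ k, ρ (k, i) (k, j)

/-!
Conjugation by `U` preserves matrix elements of the conserved quantity
`L = L_S ⊗ 1 + 1 ⊗ L_A`. Evaluating the matrix element between `ψ₀ ⊗ Ω` and `ψ₁ ⊗ Ω` before and
after `U`, the orthogonality of `ψ₀, ψ₁` kills the `L_A` terms on both sides, leaving
`⟨ψ₀, L_S ψ₁⟩ ⟨φ₀, φ₁⟩ = ⟨ψ₀, L_S ψ₁⟩`. Hence `⟨φ₀, φ₁⟩ = 1`, which forces two unit vectors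
to coincide.
-/

namespace Matrix

section ProductVectors

variable {R : Type*} {l m n p : Type*} [Fintype m] [Fintype n]

theorem star_dotProduct_prod [CommSemiring R] [StarRing R] (x u : m → R) (y v : n → R) :
    star (fun q : m × n => x q.1 * y q.2) ⬝ᵥ (fun q : m × n => u q.1 * v q.2)
      = (star x ⬝ᵥ u) * (star y ⬝ᵥ v) := by
  simp only [dotProduct, Fintype.sum_prod_type, Pi.star_apply, star_mul', Finset.sum_mul_sum]
  exact Finset.sum_congr rfl fun _ _ => Finset.sum_congr rfl fun _ _ => by ring

theorem kronecker_mulVec_prod [CommSemiring R] (A : Matrix l m R) (B : Matrix p n R)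
    (x : m → R) (y : n → R) :
    (A ⊗ₖ B) *ᵥ (fun q : m × n => x q.1 * y q.2)
      = fun q : l × p => (A *ᵥ x) q.1 * (B *ᵥ y) q.2 := by
  funext q
  simp only [mulVec, dotProduct, Fintype.sum_prod_type, kroneckerMap_apply, Finset.sum_mul_sum]
  exact Finset.sum_congr rfl fun _ _ => Finset.sum_congr rfl fun _ _ => by ring

theorem star_prod_dotProduct_kroneckerSum_mulVec_prod [CommSemiring R] [StarRing R]
    [DecidableEq m] [DecidableEq n] (A : Matrix m m R) (B : Matrix n n R)
    (x u : m → R) (y v : n → R) :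
    star (fun q : m × n => x q.1 * y q.2) ⬝ᵥ
        ((A ⊗ₖ (1 : Matrix n n R) + (1 : Matrix m m R) ⊗ₖ B) *ᵥ
          (fun q : m × n => u q.1 * v q.2))
      = (star x ⬝ᵥ (A *ᵥ u)) * (star y ⬝ᵥ v) + (star x ⬝ᵥ u) * (star y ⬝ᵥ (B *ᵥ v)) := by
  rw [add_mulVec, dotProduct_add, kronecker_mulVec_prod, kronecker_mulVec_prod, one_mulVec,
    one_mulVec, star_dotProduct_prod, star_dotProduct_prod]

end ProductVectors

theorem star_mulVec_dotProduct_mulVec_mulVec_of_commute {R ι : Type*} [Fintype ι]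
    [CommSemiring R] [StarRing R] [DecidableEq ι] {U L : Matrix ι ι R} (hU : Uᴴ * U = 1)
    (hUL : U * L = L * U) (a b : ι → R) :
    star (U *ᵥ a) ⬝ᵥ (L *ᵥ (U *ᵥ b)) = star a ⬝ᵥ (L *ᵥ b) := by
  have hconj : Uᴴ * L * U = L := by rw [Matrix.mul_assoc, ← hUL, ← Matrix.mul_assoc, hU, one_mul]
  rw [star_mulVec, ← dotProduct_mulVec, mulVec_mulVec, mulVec_mulVec, hconj]

theorem eq_of_star_dotProduct_eq_one {R n : Type*} [Fintype n] [CommRing R] [StarRing R]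
    [PartialOrder R] [StarOrderedRing R] [NoZeroDivisors R] {v w : n → R}
    (hv : star v ⬝ᵥ v = 1) (hw : star w ⬝ᵥ w = 1) (hvw : star v ⬝ᵥ w = 1) : v = w := by
  have hwv : star w ⬝ᵥ v = 1 := by rw [star_dotProduct, hvw, star_one]
  have hdist : star (w - v) ⬝ᵥ (w - v) = 0 := by
    simp only [star_sub, dotProduct_sub, sub_dotProduct, hv, hw, hvw, hwv, sub_self]
  exact (sub_eq_zero.mp (dotProduct_star_self_eq_zero.mp hdist)).symm

end Matrix

theorem repeatable_measurement_rigidity_general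
    {m n : Type*} [Fintype m] [Fintype n] [DecidableEq m] [DecidableEq n]
    (LS : Matrix m m ℂ)
    (LA : Matrix n n ℂ)
    (U : Matrix (m × n) (m × n) ℂ) (hU : Uᴴ * U = 1)
    (hcomm : U * (LS ⊗ₖ (1 : Matrix n n ℂ) + (1 : Matrix m m ℂ) ⊗ₖ LA)
           = (LS ⊗ₖ (1 : Matrix n n ℂ) + (1 : Matrix m m ℂ) ⊗ₖ LA) * U)
    (ψ0 ψ1 : m → ℂ)
    (horth : star ψ0 ⬝ᵥ ψ1 = 0)
    (hne : star ψ0 ⬝ᵥ (LS *ᵥ ψ1) ≠ 0)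
    (Ω φ0 φ1 : n → ℂ) (hΩ : star Ω ⬝ᵥ Ω = 1)
    (hφ0 : star φ0 ⬝ᵥ φ0 = 1) (hφ1 : star φ1 ⬝ᵥ φ1 = 1)
    (hrep0 : U *ᵥ (fun p : m × n => ψ0 p.1 * Ω p.2) = fun p : m × n => ψ0 p.1 * φ0 p.2)
    (hrep1 : U *ᵥ (fun p : m × n => ψ1 p.1 * Ω p.2) = fun p : m × n => ψ1 p.1 * φ1 p.2) :
    φ0 = φ1 := by
  have hL := star_mulVec_dotProduct_mulVec_mulVec_of_commute hU hcomm
    (fun p : m × n => ψ0 p.1 * Ω p.2) (fun p : m × n => ψ1 p.1 * Ω p.2)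
  rw [hrep0, hrep1, star_prod_dotProduct_kroneckerSum_mulVec_prod,
    star_prod_dotProduct_kroneckerSum_mulVec_prod, horth, hΩ] at hL
  simp only [zero_mul, add_zero] at hL
  exact eq_of_star_dotProduct_eq_one hφ0 hφ1 (mul_left_cancel₀ hne hL)

/-- Rigidity of repeatable measurements: the final apparatus states coincide. -/
theorem repeatable_measurement_rigidity
    {m n : Type*} [Fintype m] [Fintype n] [DecidableEq m] [DecidableEq n]
    (LS : Matrix m m ℂ) (hLS : LS.IsHermitian)
    (LA : Matrix n n ℂ) (hLA : LA.IsHermitian)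
    (U : Matrix (m × n) (m × n) ℂ) (hU : Uᴴ * U = 1) (hU' : U * Uᴴ = 1)
    (hcomm : U * (LS ⊗ₖ (1 : Matrix n n ℂ) + (1 : Matrix m m ℂ) ⊗ₖ LA)
           = (LS ⊗ₖ (1 : Matrix n n ℂ) + (1 : Matrix m m ℂ) ⊗ₖ LA) * U)
    (ψ0 ψ1 : m → ℂ) (hψ0 : star ψ0 ⬝ᵥ ψ0 = 1) (hψ1 : star ψ1 ⬝ᵥ ψ1 = 1)
    (horth : star ψ0 ⬝ᵥ ψ1 = 0)
    (hne : star ψ0 ⬝ᵥ (LS *ᵥ ψ1) ≠ 0)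
    (Ω φ0 φ1 : n → ℂ) (hΩ : star Ω ⬝ᵥ Ω = 1)
    (hφ0 : star φ0 ⬝ᵥ φ0 = 1) (hφ1 : star φ1 ⬝ᵥ φ1 = 1)
    (hrep0 : U *ᵥ (fun p : m × n => ψ0 p.1 * Ω p.2) = fun p : m × n => ψ0 p.1 * φ0 p.2)
    (hrep1 : U *ᵥ (fun p : m × n => ψ1 p.1 * Ω p.2) = fun p : m × n => ψ1 p.1 * φ1 p.2) :
    φ0 = φ1 :=
  repeatable_measurement_rigidity_general LS LA U hU hcomm ψ0 ψ1 horth hne Ω φ0 φ1 hΩ hφ0 hφ1 hrep0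
    hrep1
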